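/- Let X and Y be Polish spaces and c_Y a positive continuous cost function on Y. For any probability measure γ on X × Y with marginals μ on X and ν on Y such that diam_{c_Y} ν < ∞, the equality τ^Y_{c_Y}(γ) = diam_{c_Y} ν holds if and only if γ = (id, φ)_*μ for a measurable function φ : X → Y (i.e., γ is the law of (ξ, φ(ξ)) with ξ ∼ μ). -/

import Mathlib

/-!
If `τ = diam ν < ∞`, then, since `T(γₓ, ν) ≤ ∫∫ c d(γₓ ⊗ ν)` for every `x` and both sides
integrate to `diam ν`, the product coupling `γₓ ⊗ ν` is optimal for a.e. `x`. A measure `γₓ`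
that is not a Dirac mass charges two basis sets `U`, `V` on which `c` is small within each set
and large across; for a.e. `x` both are then charged by `ν = ∫ γₓ dμ` as well. Moving mass of
`γₓ ⊗ ν` from `U × V ∪ V × U` to `U × U ∪ V × V` keeps both marginals and strictly lowers the
cost, a contradiction. Hence `γₓ = δ_{φ x}` a.e., and `φ` can be chosen measurable. Conversely,
`T(δ_y, ν) = ∫ c(y, ·) dν`, which integrates against `μ` to `diam ν` because `φ_* μ = ν`.
-/

open MeasureTheory ENNReal Filter Topology ProbabilityTheory

noncomputable def otCost {Z : Type*} [MeasurableSpace Z]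
    (c : Z → Z → ℝ≥0∞) (μ ν : Measure Z) : ℝ≥0∞ :=
  ⨅ (π : Measure (Z × Z)) (_ : π.map Prod.fst = μ ∧ π.map Prod.snd = ν),
    ∫⁻ p, c p.1 p.2 ∂π

noncomputable def diamC {Z : Type*} [MeasurableSpace Z]
    (c : Z → Z → ℝ≥0∞) (μ : Measure Z) : ℝ≥0∞ :=
  ∫⁻ z₁, ∫⁻ z₂, c z₁ z₂ ∂μ ∂μ

/-- The marginal transport dependency `τ^Y(γ) = ∫ T_{c_Y}(γ_x, ν) dμ(x)`, expressed via
a disintegration kernel `κ` of `γ` (so that `γ_x = κ x`). -/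
noncomputable def marginalTdep {X Y : Type*} [MeasurableSpace X] [MeasurableSpace Y]
    (cY : Y → Y → ℝ≥0∞) (γ : Measure (X × Y)) (κ : Kernel X Y) : ℝ≥0∞ :=
  ∫⁻ x, otCost cY (κ x) (γ.map Prod.snd) ∂(γ.map Prod.fst)

section OTCost

variable {Z : Type*} [MeasurableSpace Z] {c : Z → Z → ℝ≥0∞}

lemma otCost_le_lintegral {π : Measure (Z × Z)} {μ ν : Measure Z}
    (h₁ : π.map Prod.fst = μ) (h₂ : π.map Prod.snd = ν) :
    otCost c μ ν ≤ ∫⁻ p, c p.1 p.2 ∂π :=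
  iInf₂_le π ⟨h₁, h₂⟩

lemma otCost_le_lintegral_prod (hc : Measurable (Function.uncurry c))
    (ρ ν : Measure Z) [IsProbabilityMeasure ρ] [IsProbabilityMeasure ν] :
    otCost c ρ ν ≤ ∫⁻ y, ∫⁻ z, c y z ∂ν ∂ρ :=
  (otCost_le_lintegral (π := ρ.prod ν) (by simp) (by simp)).trans_eq
    (lintegral_prod _ hc.aemeasurable)

lemma otCost_dirac_left [MeasurableSingletonClass Z] (hc : Measurable (Function.uncurry c))
    (y : Z) (ν : Measure Z) [IsProbabilityMeasure ν] :
    otCost c (Measure.dirac y) ν = ∫⁻ z, c y z ∂ν := by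
  have hcy : Measurable (c y) := hc.comp measurable_prodMk_left
  refine le_antisymm ?_ (le_iInf₂ fun π ⟨h₁, h₂⟩ => ?_)
  · refine (otCost_le_lintegral (π := (Measure.dirac y).prod ν) (by simp) (by simp)).trans_eq ?_
    rw [Measure.dirac_prod]
    exact lintegral_map hc measurable_prodMk_left
  · have hfst : ∀ᵐ p ∂π, p.1 = y := by
      have : ∀ᵐ x ∂π.map Prod.fst, x = y := by rw [h₁, ae_dirac_eq, eventually_pure]
      exact ae_of_ae_map measurable_fst.aemeasurable this
    refine le_of_eq ?_
    calc ∫⁻ z, c y z ∂ν = ∫⁻ p, c y p.2 ∂π := by rw [← h₂, lintegral_map hcy measurable_snd]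
      _ = ∫⁻ p, c p.1 p.2 ∂π := lintegral_congr_ae (by filter_upwards [hfst] with p hp; rw [hp])

end OTCost

lemma eq_dirac_of_ae_eq {Z : Type*} [MeasurableSpace Z] {ρ : Measure Z} [IsProbabilityMeasure ρ]
    {y : Z} (h : ∀ᵐ z ∂ρ, z = y) : ρ = Measure.dirac y := by
  have hnull : ρ {z | z ≠ y} = 0 := ae_iff.1 h
  ext s hs
  rw [Measure.dirac_apply' _ hs]
  by_cases hy : y ∈ s
  · rw [Set.indicator_of_mem hy]
    refine (prob_compl_eq_zero_iff hs).1 (measure_mono_null (fun z hz => ?_) hnull)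
    rintro rfl
    exact hz hy
  · rw [Set.indicator_of_notMem hy]
    refine measure_mono_null (fun z hz => ?_) hnull
    rintro rfl
    exact hy hz

lemma exists_eq_dirac_of_ae_prod_eq {Z : Type*} [MeasurableSpace Z] {ρ : Measure Z}
    [IsProbabilityMeasure ρ] (h : ∀ᵐ p ∂ρ.prod ρ, p.1 = p.2) : ∃ y, ρ = Measure.dirac y := by
  obtain ⟨y, hy⟩ := (Measure.ae_ae_of_ae_prod h).exists
  exact ⟨y, eq_dirac_of_ae_eq (hy.mono fun _ h => h.symm)⟩

def CostSeparated {Z : Type*} (c : Z → Z → ℝ≥0∞) (U V : Set Z) : Prop :=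
  ∃ ε δ : ℝ≥0∞, ε < δ ∧ (∀ y ∈ U, ∀ z ∈ U, c y z ≤ ε) ∧ (∀ y ∈ V, ∀ z ∈ V, c y z ≤ ε) ∧
    (∀ y ∈ U, ∀ z ∈ V, δ ≤ c y z) ∧ (∀ y ∈ V, ∀ z ∈ U, δ ≤ c y z)

section ProdCond

variable {Z : Type*} [MeasurableSpace Z] {ρ ν : Measure Z} {S T : Set Z}

lemma restrict_eq_smul_cond [IsFiniteMeasure ρ] (hS : ρ S ≠ 0) : ρ.restrict S = ρ S • ρ[|S] := by
  rw [ProbabilityTheory.cond, smul_smul, ENNReal.mul_inv_cancel hS (measure_ne_top _ _), one_smul]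

lemma restrict_prod_eq_smul_prod_cond [IsFiniteMeasure ρ] [IsFiniteMeasure ν]
    (hS : ρ S ≠ 0) (hT : ν T ≠ 0) :
    (ρ.prod ν).restrict (S ×ˢ T) = (ρ S * ν T) • (ρ[|S]).prod (ν[|T]) := by
  rw [← Measure.prod_restrict, restrict_eq_smul_cond hS, restrict_eq_smul_cond hT,
    Measure.prod_smul_left, Measure.prod_smul_right, smul_smul]

lemma ae_mem_prod_cond (hS : MeasurableSet S) (hT : MeasurableSet T) :
    ∀ᵐ p ∂(ρ[|S]).prod (ν[|T]), p ∈ S ×ˢ T :=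
  (Measure.ae_prod_mem_iff_ae_ae_mem (hS.prod hT)).2 <|
    (ae_cond_mem hS).mono fun _ hy => (ae_cond_mem hT).mono fun _ hz => ⟨hy, hz⟩

variable [IsFiniteMeasure ρ] [IsFiniteMeasure ν] {c : Z → Z → ℝ≥0∞} {r : ℝ≥0∞}

lemma lintegral_prod_cond_le (hS : MeasurableSet S) (hT : MeasurableSet T)
    (hρS : ρ S ≠ 0) (hνT : ν T ≠ 0) (h : ∀ y ∈ S, ∀ z ∈ T, c y z ≤ r) :
    ∫⁻ p, c p.1 p.2 ∂(ρ[|S]).prod (ν[|T]) ≤ r := by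
  have := cond_isProbabilityMeasure hρS
  have := cond_isProbabilityMeasure hνT
  calc ∫⁻ p, c p.1 p.2 ∂(ρ[|S]).prod (ν[|T]) ≤ ∫⁻ _, r ∂(ρ[|S]).prod (ν[|T]) :=
        lintegral_mono_ae ((ae_mem_prod_cond hS hT).mono fun p hp => h _ hp.1 _ hp.2)
    _ = r := by simp

lemma le_lintegral_prod_cond (hS : MeasurableSet S) (hT : MeasurableSet T)
    (hρS : ρ S ≠ 0) (hνT : ν T ≠ 0) (h : ∀ y ∈ S, ∀ z ∈ T, r ≤ c y z) :
    r ≤ ∫⁻ p, c p.1 p.2 ∂(ρ[|S]).prod (ν[|T]) := by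
  have := cond_isProbabilityMeasure hρS
  have := cond_isProbabilityMeasure hνT
  calc r = ∫⁻ _, r ∂(ρ[|S]).prod (ν[|T]) := by simp
    _ ≤ ∫⁻ p, c p.1 p.2 ∂(ρ[|S]).prod (ν[|T]) :=
        lintegral_mono_ae ((ae_mem_prod_cond hS hT).mono fun p hp => h _ hp.1 _ hp.2)

end ProdCond

lemma tsub_smul_add_smul {M : Type*} [AddCommMonoid M] [Module ℝ≥0∞ M] {s t : ℝ≥0∞}
    (hst : s ≤ t) (m : M) : (t - s) • m + s • m = t • m := by
  rw [← add_smul, tsub_add_cancel_of_le hst]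

section Swap

variable {Z : Type*} [MeasurableSpace Z] (ρ ν : Measure Z) (U V : Set Z)

noncomputable def swapMass : ℝ≥0∞ := min (ρ U * ν V) (ρ V * ν U)

/-- `ρ ⊗ ν` with mass `swapMass` moved from the blocks `U × V`, `V × U` to `U × U`, `V × V`. -/
noncomputable def swapCoupling : Measure (Z × Z) :=
  (ρ.prod ν).restrict (U ×ˢ V ∪ V ×ˢ U)ᶜ
    + ((ρ U * ν V - swapMass ρ ν U V) • (ρ[|U]).prod (ν[|V])
      + swapMass ρ ν U V • (ρ[|U]).prod (ν[|U]))
    + ((ρ V * ν U - swapMass ρ ν U V) • (ρ[|V]).prod (ν[|U])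
      + swapMass ρ ν U V • (ρ[|V]).prod (ν[|V]))

variable {ρ ν U V}

lemma swapMass_ne_zero (hρU : ρ U ≠ 0) (hρV : ρ V ≠ 0) (hνU : ν U ≠ 0) (hνV : ν V ≠ 0) :
    swapMass ρ ν U V ≠ 0 :=
  (lt_min (pos_iff_ne_zero.2 (mul_ne_zero hρU hνV))
    (pos_iff_ne_zero.2 (mul_ne_zero hρV hνU))).ne'

variable [IsProbabilityMeasure ρ] [IsProbabilityMeasure ν]

lemma swapMass_ne_top : swapMass ρ ν U V ≠ ∞ :=
  ((min_le_left _ _).trans_lt (ENNReal.mul_lt_top (measure_lt_top ρ U) (measure_lt_top ν V))).ne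

variable (hU : MeasurableSet U) (hV : MeasurableSet V) (hUV : Disjoint U V)
  (hρU : ρ U ≠ 0) (hρV : ρ V ≠ 0) (hνU : ν U ≠ 0) (hνV : ν V ≠ 0)
include hU hV hUV hρU hρV hνU hνV

lemma prod_eq_restrict_add_smul_prod_cond :
    ρ.prod ν = (ρ.prod ν).restrict (U ×ˢ V ∪ V ×ˢ U)ᶜ
      + (ρ U * ν V) • (ρ[|U]).prod (ν[|V]) + (ρ V * ν U) • (ρ[|V]).prod (ν[|U]) := by
  have hdisj : Disjoint (U ×ˢ V) (V ×ˢ U) := Set.disjoint_prod.2 (Or.inl hUV)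
  rw [← restrict_prod_eq_smul_prod_cond hρU hνV, ← restrict_prod_eq_smul_prod_cond hρV hνU,
    add_assoc, ← Measure.restrict_union hdisj (hV.prod hU), add_comm,
    Measure.restrict_add_restrict_compl ((hU.prod hV).union (hV.prod hU))]

lemma map_fst_swapCoupling : (swapCoupling ρ ν U V).map Prod.fst = ρ := by
  have := cond_isProbabilityMeasure hνU
  have := cond_isProbabilityMeasure hνV
  have h := congrArg (Measure.map Prod.fst)
    (prod_eq_restrict_add_smul_prod_cond hU hV hUV hρU hρV hνU hνV)
  simp only [swapCoupling, Measure.map_add _ _ measurable_fst, Measure.map_smul,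
    Measure.map_fst_prod, measure_univ, one_smul] at h ⊢
  conv_rhs => rw [h, ← tsub_smul_add_smul (s := swapMass ρ ν U V) (min_le_left _ _),
    ← tsub_smul_add_smul (s := swapMass ρ ν U V) (min_le_right _ _)]

lemma map_snd_swapCoupling : (swapCoupling ρ ν U V).map Prod.snd = ν := by
  have := cond_isProbabilityMeasure hρU
  have := cond_isProbabilityMeasure hρV
  have h := congrArg (Measure.map Prod.snd)
    (prod_eq_restrict_add_smul_prod_cond hU hV hUV hρU hρV hνU hνV)
  simp only [swapCoupling, Measure.map_add _ _ measurable_snd, Measure.map_smul,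
    Measure.map_snd_prod, measure_univ, one_smul] at h ⊢
  conv_rhs => rw [h, ← tsub_smul_add_smul (s := swapMass ρ ν U V) (min_le_left _ _),
    ← tsub_smul_add_smul (s := swapMass ρ ν U V) (min_le_right _ _)]
  rw [swapMass]
  abel

lemma lintegral_swapCoupling_add_le {c : Z → Z → ℝ≥0∞} (hc : Measurable (Function.uncurry c))
    {ε δ : ℝ≥0∞} (hUU : ∀ y ∈ U, ∀ z ∈ U, c y z ≤ ε) (hVV : ∀ y ∈ V, ∀ z ∈ V, c y z ≤ ε)
    (hUV_ge : ∀ y ∈ U, ∀ z ∈ V, δ ≤ c y z) (hVU_ge : ∀ y ∈ V, ∀ z ∈ U, δ ≤ c y z) :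
    ∫⁻ p, c p.1 p.2 ∂swapCoupling ρ ν U V + (swapMass ρ ν U V * δ + swapMass ρ ν U V * δ)
      ≤ ∫⁻ y, ∫⁻ z, c y z ∂ν ∂ρ + (swapMass ρ ν U V * ε + swapMass ρ ν U V * ε) := by
  set s := swapMass ρ ν U V
  set cost : Measure (Z × Z) → ℝ≥0∞ := fun m => ∫⁻ p, c p.1 p.2 ∂m
  set R := (ρ.prod ν).restrict (U ×ˢ V ∪ V ×ˢ U)ᶜ with hR
  have hcost_prod : ∫⁻ y, ∫⁻ z, c y z ∂ν ∂ρ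
      = cost R + ρ U * ν V * cost ((ρ[|U]).prod (ν[|V]))
        + ρ V * ν U * cost ((ρ[|V]).prod (ν[|U])) := by
    rw [← lintegral_prod (fun p : Z × Z => c p.1 p.2) hc.aemeasurable,
      prod_eq_restrict_add_smul_prod_cond hU hV hUV hρU hρV hνU hνV, ← hR]
    simp only [cost, lintegral_add_measure, lintegral_smul_measure, smul_eq_mul]
  have hmix {t x : ℝ≥0∞} (hst : s ≤ t) (hx : δ ≤ x) : (t - s) * x + s * δ ≤ t * x :=
    calc (t - s) * x + s * δ ≤ (t - s) * x + s * x := by gcongr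
      _ = t * x := by rw [← add_mul, tsub_add_cancel_of_le hst]
  rw [hcost_prod]
  simp only [swapCoupling, lintegral_add_measure, lintegral_smul_measure, smul_eq_mul]
  calc _ = cost R + ((ρ U * ν V - s) * cost ((ρ[|U]).prod (ν[|V])) + s * δ)
        + ((ρ V * ν U - s) * cost ((ρ[|V]).prod (ν[|U])) + s * δ)
        + (s * cost ((ρ[|U]).prod (ν[|U])) + s * cost ((ρ[|V]).prod (ν[|V]))) := by ring
    _ ≤ _ := by
      gcongr
      · exact hmix (min_le_left _ _) (le_lintegral_prod_cond hU hV hρU hνV hUV_ge)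
      · exact hmix (min_le_right _ _) (le_lintegral_prod_cond hV hU hρV hνU hVU_ge)
      · exact lintegral_prod_cond_le hU hU hρU hνU hUU
      · exact lintegral_prod_cond_le hV hV hρV hνV hVV

end Swap

lemma otCost_lt_lintegral_prod_of_costSeparated {Z : Type*} [MeasurableSpace Z]
    {c : Z → Z → ℝ≥0∞} (hc : Measurable (Function.uncurry c))
    {ρ ν : Measure Z} [IsProbabilityMeasure ρ] [IsProbabilityMeasure ν] {U V : Set Z}
    (hU : MeasurableSet U) (hV : MeasurableSet V) (hsep : CostSeparated c U V)
    (hρU : ρ U ≠ 0) (hρV : ρ V ≠ 0) (hνU : ν U ≠ 0) (hνV : ν V ≠ 0)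
    (hfin : ∫⁻ y, ∫⁻ z, c y z ∂ν ∂ρ ≠ ∞) :
    otCost c ρ ν < ∫⁻ y, ∫⁻ z, c y z ∂ν ∂ρ := by
  obtain ⟨ε, δ, hεδ, hUU, hVV, hUV_ge, hVU_ge⟩ := hsep
  have hUV : Disjoint U V := Set.disjoint_left.2 fun y hyU hyV =>
    ((hUU y hyU y hyU).trans_lt hεδ).not_ge (hUV_ge y hyU y hyV)
  set s := swapMass ρ ν U V
  have hgap : s * ε + s * ε < s * δ + s * δ :=
    have h := ENNReal.mul_lt_mul_right (swapMass_ne_zero hρU hρV hνU hνV) swapMass_ne_top hεδ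
    ENNReal.add_lt_add h h
  refine lt_of_add_lt_add_right (calc
    otCost c ρ ν + (s * δ + s * δ) ≤ ∫⁻ p, c p.1 p.2 ∂swapCoupling ρ ν U V + (s * δ + s * δ) := by
        gcongr
        exact otCost_le_lintegral (map_fst_swapCoupling hU hV hUV hρU hρV hνU hνV)
          (map_snd_swapCoupling hU hV hUV hρU hρV hνU hνV)
    _ ≤ ∫⁻ y, ∫⁻ z, c y z ∂ν ∂ρ + (s * ε + s * ε) :=
        lintegral_swapCoupling_add_le hU hV hUV hρU hρV hνU hνV hc hUU hVV hUV_ge hVU_ge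
    _ < ∫⁻ y, ∫⁻ z, c y z ∂ν ∂ρ + (s * δ + s * δ) := ENNReal.add_lt_add_left hfin hgap)

lemma exists_costSeparated_mem_basis {Y : Type*} [TopologicalSpace Y] {b : Set (Set Y)}
    (hb : TopologicalSpace.IsTopologicalBasis b) {c : Y → Y → ℝ≥0∞}
    (hc : Continuous (Function.uncurry c)) (hdiag : ∀ y, c y y = 0) {y₁ y₂ : Y}
    (h₁₂ : c y₁ y₂ ≠ 0) (h₂₁ : c y₂ y₁ ≠ 0) :
    ∃ U ∈ b, ∃ V ∈ b, y₁ ∈ U ∧ y₂ ∈ V ∧ CostSeparated c U V := by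
  obtain ⟨δ, hδ0, hδ⟩ := exists_between (lt_min (pos_iff_ne_zero.2 h₁₂) (pos_iff_ne_zero.2 h₂₁))
  obtain ⟨ε, hε0, hεδ⟩ := exists_between hδ0
  have hlow (y : Y) : ∃ t ∈ 𝓝 y, t ×ˢ t ⊆ {p | Function.uncurry c p < ε} := by
    have h : {p : Y × Y | Function.uncurry c p < ε} ∈ 𝓝 (y, y) :=
      (isOpen_lt hc continuous_const).mem_nhds (by simpa [hdiag] using hε0)
    rw [nhds_prod_eq] at h
    exact mem_prod_self_iff.1 h
  have hhigh {y z : Y} (h : δ < c y z) :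
      ∃ t₁ ∈ 𝓝 y, ∃ t₂ ∈ 𝓝 z, t₁ ×ˢ t₂ ⊆ {p | δ < Function.uncurry c p} := by
    have h : {p : Y × Y | δ < Function.uncurry c p} ∈ 𝓝 (y, z) :=
      (isOpen_lt continuous_const hc).mem_nhds h
    rw [nhds_prod_eq] at h
    exact mem_prod_iff.1 h
  obtain ⟨U₀, hU₀, hU₀U₀⟩ := hlow y₁
  obtain ⟨V₀, hV₀, hV₀V₀⟩ := hlow y₂
  obtain ⟨U₁, hU₁, V₁, hV₁, hU₁V₁⟩ := hhigh (hδ.trans_le (min_le_left _ _))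
  obtain ⟨V₂, hV₂, U₂, hU₂, hV₂U₂⟩ := hhigh (hδ.trans_le (min_le_right _ _))
  obtain ⟨U, hUb, hy₁U, hUsub⟩ := hb.mem_nhds_iff.1 (inter_mem (inter_mem hU₀ hU₁) hU₂)
  obtain ⟨V, hVb, hy₂V, hVsub⟩ := hb.mem_nhds_iff.1 (inter_mem (inter_mem hV₀ hV₁) hV₂)
  refine ⟨U, hUb, V, hVb, hy₁U, hy₂V, ε, δ, hεδ, fun y hy z hz => ?_, fun y hy z hz => ?_,
    fun y hy z hz => ?_, fun y hy z hz => ?_⟩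
  · exact le_of_lt (hU₀U₀ (Set.mk_mem_prod (hUsub hy).1.1 (hUsub hz).1.1))
  · exact le_of_lt (hV₀V₀ (Set.mk_mem_prod (hVsub hy).1.1 (hVsub hz).1.1))
  · exact le_of_lt (hU₁V₁ (Set.mk_mem_prod (hUsub hy).1.2 (hVsub hz).1.2))
  · exact le_of_lt (hV₂U₂ (Set.mk_mem_prod (hVsub hy).2 (hUsub hz).2))

lemma exists_eq_dirac_of_otCost_eq_lintegral_prod {Y : Type*} [TopologicalSpace Y]
    [MeasurableSpace Y] [OpensMeasurableSpace Y] {b : Set (Set Y)}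
    (hb : TopologicalSpace.IsTopologicalBasis b) (hbc : b.Countable) {c : Y → Y → ℝ≥0∞}
    (hc : Continuous (Function.uncurry c)) (hdiag : ∀ y, c y y = 0)
    (hpos : ∀ y₁ y₂, y₁ ≠ y₂ → 0 < c y₁ y₂) {ρ ν : Measure Y} [IsProbabilityMeasure ρ]
    [IsProbabilityMeasure ν] (hsupp : ∀ B ∈ b, ρ B ≠ 0 → ν B ≠ 0)
    (hfin : ∫⁻ y, ∫⁻ z, c y z ∂ν ∂ρ ≠ ∞) (heq : otCost c ρ ν = ∫⁻ y, ∫⁻ z, c y z ∂ν ∂ρ) :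
    ∃ y, ρ = Measure.dirac y := by
  have := hb.secondCountableTopology hbc
  set S := {p : Set Y × Set Y | p.1 ∈ b ∧ p.2 ∈ b ∧ CostSeparated c p.1 p.2}
  have hS : S.Countable := (hbc.prod hbc).mono fun _ hp => Set.mem_prod.2 ⟨hp.1, hp.2.1⟩
  have hnull : ∀ p ∈ S, (ρ.prod ρ) (p.1 ×ˢ p.2) = 0 := by
    rintro ⟨U, V⟩ ⟨hU, hV, hsep⟩
    rw [Measure.prod_prod]
    by_contra h
    have hρU : ρ U ≠ 0 := left_ne_zero_of_mul h
    have hρV : ρ V ≠ 0 := right_ne_zero_of_mul h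
    exact (otCost_lt_lintegral_prod_of_costSeparated hc.measurable (hb.isOpen hU).measurableSet
      (hb.isOpen hV).measurableSet hsep hρU hρV (hsupp U hU hρU) (hsupp V hV hρV) hfin).ne heq
  refine exists_eq_dirac_of_ae_prod_eq
    (ae_iff.2 (measure_mono_null ?_ ((measure_biUnion_null_iff hS).2 hnull)))
  rintro ⟨y₁, y₂⟩ (h : y₁ ≠ y₂)
  obtain ⟨U, hU, V, hV, h₁, h₂, hsep⟩ :=
    exists_costSeparated_mem_basis hb hc hdiag (hpos _ _ h).ne' (hpos _ _ h.symm).ne'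
  exact Set.mem_biUnion (show (U, V) ∈ S from ⟨hU, hV, hsep⟩) (Set.mk_mem_prod h₁ h₂)

lemma exists_measurable_ae_eq_deterministic {X Y : Type*} [MeasurableSpace X] [MeasurableSpace Y]
    [StandardBorelSpace Y] [Nonempty Y] {μ : Measure X} (κ : Kernel X Y)
    (h : ∀ᵐ x ∂μ, ∃ y, κ x = Measure.dirac y) :
    ∃ φ : X → Y, ∃ hφ : Measurable φ, κ =ᵐ[μ] Kernel.deterministic φ hφ := by
  obtain ⟨i, hi⟩ := exists_measurableEmbedding_real Y
  set e : Y → ℝ≥0∞ := fun y => ENNReal.ofReal (Real.exp (i y))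
  have he_inj : e.Injective := fun y z hyz => hi.injective <| Real.exp_injective <|
    (ENNReal.ofReal_eq_ofReal_iff (Real.exp_pos _).le (Real.exp_pos _).le).1 hyz
  have he : MeasurableEmbedding e := (by fun_prop : Measurable e).measurableEmbedding he_inj
  obtain ⟨g, hg, hge⟩ := he.exists_measurable_extend measurable_id fun _ => ‹Nonempty Y›
  refine ⟨g ∘ fun x => ∫⁻ y, e y ∂κ x, hg.comp he.measurable.lintegral_kernel, ?_⟩
  filter_upwards [h] with x ⟨y, hy⟩
  rw [Kernel.deterministic_apply, Function.comp_apply, hy, lintegral_dirac' _ he.measurable]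
  exact congrArg _ (congrFun hge y).symm

lemma ae_forall_comp_apply_ne_zero {X Y : Type*} [MeasurableSpace X] [MeasurableSpace Y]
    {μ : Measure X} {κ : Kernel X Y} {b : Set (Set Y)} (hbc : b.Countable)
    (hb : ∀ B ∈ b, MeasurableSet B) :
    ∀ᵐ x ∂μ, ∀ B ∈ b, κ x B ≠ 0 → (κ ∘ₘ μ) B ≠ 0 := by
  refine (ae_ball_iff hbc).2 fun B hB => ?_
  by_cases hνB : (κ ∘ₘ μ) B = 0
  · rw [Measure.bind_apply (hb B hB) κ.aemeasurable,
      lintegral_eq_zero_iff (κ.measurable_coe (hb B hB))] at hνB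
    filter_upwards [hνB] with x hx h using absurd hx h
  · exact ae_of_all _ fun _ _ => hνB

lemma ae_exists_eq_dirac_of_lintegral_otCost_eq_diamC {X Y : Type*} [MeasurableSpace X]
    [TopologicalSpace Y] [SecondCountableTopology Y] [MeasurableSpace Y] [OpensMeasurableSpace Y]
    {c : Y → Y → ℝ≥0∞} (hc : Continuous (Function.uncurry c)) (hdiag : ∀ y, c y y = 0)
    (hpos : ∀ y₁ y₂, y₁ ≠ y₂ → 0 < c y₁ y₂) {μ : Measure X} [IsProbabilityMeasure μ]
    (κ : Kernel X Y) [IsMarkovKernel κ] (hfin : diamC c (κ ∘ₘ μ) ≠ ∞)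
    (heq : ∫⁻ x, otCost c (κ x) (κ ∘ₘ μ) ∂μ = diamC c (κ ∘ₘ μ)) :
    ∀ᵐ x ∂μ, ∃ y, κ x = Measure.dirac y := by
  obtain ⟨b, hbc, -, hb⟩ := TopologicalSpace.exists_countable_basis Y
  set ν := κ ∘ₘ μ
  have hcm : Measurable (Function.uncurry c) := hc.measurable
  have hP : Measurable fun y => ∫⁻ z, c y z ∂ν := hcm.lintegral_prod_right
  have hPκ : Measurable fun x => ∫⁻ y, ∫⁻ z, c y z ∂ν ∂κ x := hP.lintegral_kernel
  have hint : ∫⁻ x, ∫⁻ y, ∫⁻ z, c y z ∂ν ∂κ x ∂μ = diamC c ν :=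
    (Measure.lintegral_bind κ.aemeasurable hP.aemeasurable).symm
  -- `x ↦ otCost c (κ x) ν` need not be measurable; only the larger side has to be.
  have h_eq : ∀ᵐ x ∂μ, otCost c (κ x) ν = ∫⁻ y, ∫⁻ z, c y z ∂ν ∂κ x :=
    ae_eq_of_ae_le_of_lintegral_le (ae_of_all _ fun x => otCost_le_lintegral_prod hcm (κ x) ν)
      (heq ▸ hfin) hPκ.aemeasurable (hint.trans heq.symm).le
  have h_fin : ∀ᵐ x ∂μ, ∫⁻ y, ∫⁻ z, c y z ∂ν ∂κ x ≠ ∞ :=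
    (ae_lt_top hPκ (hint ▸ hfin)).mono fun _ => ne_of_lt
  filter_upwards [h_eq, h_fin,
    ae_forall_comp_apply_ne_zero hbc fun B hB => (hb.isOpen hB).measurableSet]
    with x hx_eq hx_fin hx_supp
  exact exists_eq_dirac_of_otCost_eq_lintegral_prod hb hbc hc hdiag hpos hx_supp hx_fin hx_eq

lemma lintegral_otCost_dirac_eq_diamC_map {X Y : Type*} [MeasurableSpace X] [MeasurableSpace Y]
    [MeasurableSingletonClass Y] {c : Y → Y → ℝ≥0∞} (hc : Measurable (Function.uncurry c))
    {μ : Measure X} [IsProbabilityMeasure μ] {φ : X → Y} (hφ : Measurable φ) :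
    ∫⁻ x, otCost c (Measure.dirac (φ x)) (μ.map φ) ∂μ = diamC c (μ.map φ) := by
  have := Measure.isProbabilityMeasure_map (μ := μ) hφ.aemeasurable
  simp_rw [otCost_dirac_left hc]
  exact (lintegral_map hc.lintegral_prod_right hφ).symm

theorem marginalTdep_eq_diam_iff_deterministic_general
    {X Y : Type*} [MeasurableSpace X]
    [TopologicalSpace Y] [PolishSpace Y] [MeasurableSpace Y] [BorelSpace Y]
    (cY : Y → Y → ℝ≥0∞)
    (hcY_cont : Continuous (Function.uncurry cY))
    (hcY_diag : ∀ y, cY y y = 0)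
    (hcY_pos : ∀ y₁ y₂, y₁ ≠ y₂ → 0 < cY y₁ y₂)
    (γ : Measure (X × Y)) [IsProbabilityMeasure γ]
    (κ : Kernel X Y) [IsMarkovKernel κ]
    (hκ : (γ.map Prod.fst) ⊗ₘ κ = γ)
    (hdiam : diamC cY (γ.map Prod.snd) ≠ ∞) :
    marginalTdep cY γ κ = diamC cY (γ.map Prod.snd) ↔
      ∃ φ : X → Y, Measurable φ ∧ γ = (γ.map Prod.fst).map fun x => (x, φ x) := by
  have : Nonempty Y := (nonempty_of_isProbabilityMeasure γ).map Prod.snd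
  rw [marginalTdep]
  set μ := γ.map Prod.fst
  have : IsProbabilityMeasure μ := Measure.isProbabilityMeasure_map measurable_fst.aemeasurable
  have hν : γ.map Prod.snd = κ ∘ₘ μ := by
    rw [← Measure.snd_compProd μ κ, hκ]
    rfl
  rw [hν] at hdiam ⊢
  constructor
  · intro h
    obtain ⟨φ, hφ, hκφ⟩ := exists_measurable_ae_eq_deterministic κ
      (ae_exists_eq_dirac_of_lintegral_otCost_eq_diamC hcY_cont hcY_diag hcY_pos κ hdiam h)
    exact ⟨φ, hφ, by rw [← hκ, Measure.compProd_congr hκφ, Measure.compProd_deterministic]⟩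
  · rintro ⟨φ, hφ, hγ⟩
    have hκφ : κ =ᵐ[μ] Kernel.deterministic φ hφ :=
      Kernel.ae_eq_of_compProd_eq (by rw [hκ, Measure.compProd_deterministic]; exact hγ)
    rw [Measure.comp_congr hκφ, Measure.deterministic_comp_eq_map,
      ← lintegral_otCost_dirac_eq_diamC_map hcY_cont.measurable hφ]
    exact lintegral_congr_ae (hκφ.mono fun x hx => by simp only [hx, Kernel.deterministic_apply])

/-- For a positive continuous cost `c_Y` on `Y` and a probability
measure `γ` on `X × Y` whose second marginal has finite `c_Y`-diameter, the marginal
transport dependency attains its maximal value `diam_{c_Y} ν` if and only if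
`γ = (id, φ)_*μ` for a measurable function `φ : X → Y`. -/
theorem marginalTdep_eq_diam_iff_deterministic
    {X Y : Type*} [TopologicalSpace X] [PolishSpace X] [MeasurableSpace X] [BorelSpace X]
    [TopologicalSpace Y] [PolishSpace Y] [MeasurableSpace Y] [BorelSpace Y]
    (cY : Y → Y → ℝ≥0∞)
    (hcY_cont : Continuous (Function.uncurry cY))
    (hcY_symm : ∀ y₁ y₂, cY y₁ y₂ = cY y₂ y₁)
    (hcY_diag : ∀ y, cY y y = 0)
    (hcY_pos : ∀ y₁ y₂, y₁ ≠ y₂ → 0 < cY y₁ y₂)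
    (γ : Measure (X × Y)) [IsProbabilityMeasure γ]
    (κ : Kernel X Y) [IsMarkovKernel κ]
    (hκ : (γ.map Prod.fst) ⊗ₘ κ = γ)
    (hdiam : diamC cY (γ.map Prod.snd) ≠ ∞) :
    marginalTdep cY γ κ = diamC cY (γ.map Prod.snd) ↔
      ∃ φ : X → Y, Measurable φ ∧ γ = (γ.map Prod.fst).map fun x => (x, φ x) :=
  marginalTdep_eq_diam_iff_deterministic_general cY hcY_cont hcY_diag hcY_pos γ κ hκ hdiam
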